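/- Let a, b ∈ (0,1) with b < a and a+b > 1, and define for x ∈ (a+b−1, b) the function I(x) = c·K(arcsin(ξ(x)), m) where c = (2/π²)·sgn(b−a)/√(b(1−b)), ξ(x) = √((1−b)(b−x)/((1−a)(a−x))), m = a(1−a)/(b(1−b)), and K(φ,m) = ∫₀^φ (1−m·sin²θ)^(−1/2) dθ. Then I′(x) = π⁻²·(x(a−x)(b−x)(1+x−a−b))^(−1/2). -/

import Mathlib

/-!
With `u(x) = ξ(x)²`, the chain rule gives
`I'(x) = c · (1 - m u)^(-1/2) · u' / (2 √(u (1 - u)))`, where `u' = (1-b)(b-a)/((1-a)(a-x)²)`.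
The whole computation rests on the rational identity
`b(1-b) · (1 - m u) · u(1-u) = u'² · x(a-x)(b-x)(1+x-a-b)`,
so the three square roots combine into `|u'| · √(x(a-x)(b-x)(1+x-a-b))`,
and the sign `sgn(b-a) = -1` cancels that of `u'`.
-/

open Real

/-- The incomplete elliptic integral of the first kind, `K(φ, m)` in the statement. -/
noncomputable def ellipticF (φ m : ℝ) : ℝ :=
  ∫ θ in (0 : ℝ)..φ, (1 - m * sin θ ^ 2) ^ (-(1 / 2 : ℝ))

lemma one_sub_mul_sin_sq_pos {m : ℝ} (hm : m < 1) (θ : ℝ) : 0 < 1 - m * sin θ ^ 2 := by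
  nlinarith [sin_sq_le_one θ, mul_nonneg (sq_nonneg (sin θ)) (sub_pos.2 hm).le]

lemma hasDerivAt_ellipticF {m : ℝ} (hm : m < 1) (φ : ℝ) :
    HasDerivAt (fun ψ => ellipticF ψ m) ((1 - m * sin φ ^ 2) ^ (-(1 / 2 : ℝ))) φ := by
  have hcont : Continuous fun θ => (1 - m * sin θ ^ 2) ^ (-(1 / 2 : ℝ)) :=
    (continuous_const.sub (continuous_const.mul (continuous_sin.pow 2))).rpow_const
      fun θ => Or.inl (one_sub_mul_sin_sq_pos hm θ).ne'
  exact (hcont.integral_hasStrictDerivAt 0 φ).hasDerivAt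

lemma HasDerivAt.arcsin_sqrt {f : ℝ → ℝ} {f' x : ℝ} (hf : HasDerivAt f f' x)
    (h0 : 0 < f x) (h1 : f x < 1) :
    HasDerivAt (fun y => arcsin √(f y)) (f' / (2 * √(f x * (1 - f x)))) x := by
  have hs1 : √(f x) < 1 := (sqrt_lt' one_pos).2 (by simpa using h1)
  have hs0 : 0 < √(f x) := sqrt_pos.2 h0
  refine ((hasDerivAt_arcsin (by linarith) hs1.ne).comp x (hf.sqrt h0.ne')).congr_deriv ?_
  rw [sq_sqrt h0.le, sqrt_mul h0.le]
  field_simp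

lemma HasDerivAt.ellipticF_arcsin_sqrt {f : ℝ → ℝ} {f' x m : ℝ} (hm : m < 1)
    (hf : HasDerivAt f f' x) (h0 : 0 < f x) (h1 : f x < 1) :
    HasDerivAt (fun y => ellipticF (arcsin √(f y)) m)
      ((1 - m * f x) ^ (-(1 / 2 : ℝ)) * (f' / (2 * √(f x * (1 - f x))))) x := by
  refine ((hasDerivAt_ellipticF hm _).comp x (hf.arcsin_sqrt h0 h1)).congr_deriv ?_
  rw [sin_arcsin (by linarith [sqrt_nonneg (f x)]) (sqrt_le_one.2 h1.le), sq_sqrt h0.le]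

lemma hasDerivAt_mul_sub_div_mul_sub (a b p q x : ℝ) (hq : q ≠ 0) (hx : a - x ≠ 0) :
    HasDerivAt (fun y => p * (b - y) / (q * (a - y))) (p * (b - a) / (q * (a - x) ^ 2)) x := by
  have hnum := ((hasDerivAt_id' (x := x)).const_sub b).const_mul p
  have hden := ((hasDerivAt_id' (x := x)).const_sub a).const_mul q
  refine (hnum.div hden (mul_ne_zero hq hx)).congr_deriv ?_
  field_simp
  ring

lemma neg_two_div_sqrt_mul_rpow_neg_half {A B C P d : ℝ} (hA : 0 < A) (hB : 0 < B) (hC : 0 < C)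
    (hd : d < 0) (h : C * A * B = d ^ 2 * P) :
    -2 / √C * (A ^ (-(1 / 2 : ℝ)) * (d / (2 * √B))) = P ^ (-(1 / 2 : ℝ)) := by
  have hP : 0 < P := pos_of_mul_pos_right (h ▸ mul_pos (mul_pos hC hA) hB) (sq_nonneg d)
  have hroots : √C * √A * √B = -d * √P := by
    rw [← sqrt_mul hC.le, ← sqrt_mul (by positivity), h, sqrt_mul (sq_nonneg d), sqrt_sq_eq_abs,
      abs_of_neg hd]
  rw [rpow_neg hA.le, rpow_neg hP.le, ← sqrt_eq_rpow, ← sqrt_eq_rpow]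
  calc -2 / √C * ((√A)⁻¹ * (d / (2 * √B))) = -d / (√C * √A * √B) := by ring
    _ = (√P)⁻¹ := by
      rw [hroots, div_mul_cancel_left₀ (neg_ne_zero.2 hd.ne)]

section Substitution

variable {a b x : ℝ}

lemma modulus_substitution_identity (ha1 : a ≠ 1) (hb0 : b ≠ 0) (hb1 : b ≠ 1)
    (hax : a - x ≠ 0) :
    b * (1 - b) * (1 - a * (1 - a) / (b * (1 - b)) * ((1 - b) * (b - x) / ((1 - a) * (a - x)))) *
        ((1 - b) * (b - x) / ((1 - a) * (a - x)) *
          (1 - (1 - b) * (b - x) / ((1 - a) * (a - x)))) =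
      ((1 - b) * (b - a) / ((1 - a) * (a - x) ^ 2)) ^ 2 *
        (x * (a - x) * (b - x) * (1 + x - a - b)) := by
  have h1a : 1 - a ≠ 0 := sub_ne_zero.2 (Ne.symm ha1)
  have h1b : 1 - b ≠ 0 := sub_ne_zero.2 (Ne.symm hb1)
  field_simp
  ring

lemma xi_sq_mem_Ioo (hba : b < a) (hx : x ∈ Set.Ioo (a + b - 1) b) :
    (1 - b) * (b - x) / ((1 - a) * (a - x)) ∈ Set.Ioo 0 1 := by
  obtain ⟨hx1, hx2⟩ := hx
  have hden : 0 < (1 - a) * (a - x) := mul_pos (by linarith) (by linarith)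
  refine ⟨div_pos (mul_pos (by linarith) (by linarith)) hden, (div_lt_one hden).2 ?_⟩
  nlinarith

end Substitution

theorem stmt16 (a b : ℝ) (ha : a ∈ Set.Ioo (0:ℝ) 1) (hb : b ∈ Set.Ioo (0:ℝ) 1)
    (hba : b < a) (hab : 1 < a + b) (x : ℝ) (hx : x ∈ Set.Ioo (a + b - 1) b) :
    HasDerivAt (fun y : ℝ =>
      (2 / Real.pi ^ 2) * ((b - a) / |b - a|) / Real.sqrt (b * (1 - b)) *
        ∫ θ in (0:ℝ)..(Real.arcsin (Real.sqrt ((1 - b) * (b - y) / ((1 - a) * (a - y))))),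
          (1 - (a * (1 - a) / (b * (1 - b))) * Real.sin θ ^ 2) ^ (-(1/2 : ℝ)))
      ((Real.pi ^ 2)⁻¹ * (x * (a - x) * (b - x) * (1 + x - a - b)) ^ (-(1/2 : ℝ))) x := by
  obtain ⟨ha0, ha1⟩ := ha
  obtain ⟨hb0, hb1⟩ := hb
  have h1a : 0 < 1 - a := sub_pos.2 ha1
  have hax : 0 < a - x := by linarith [hx.2]
  obtain ⟨hu0, hu1⟩ := xi_sq_mem_Ioo hba hx
  have hm0 : 0 ≤ a * (1 - a) / (b * (1 - b)) := by have := sub_pos.2 hb1; positivity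
  have hm1 : a * (1 - a) / (b * (1 - b)) < 1 :=
    (div_lt_one (mul_pos hb0 (sub_pos.2 hb1))).2 (by nlinarith)
  have hsign : (b - a) / |b - a| = -1 := by
    rw [abs_of_neg (by linarith), div_neg, div_self (by linarith)]
  have hu := hasDerivAt_mul_sub_div_mul_sub a b (1 - b) (1 - a) x h1a.ne' hax.ne'
  have hu'_neg : (1 - b) * (b - a) / ((1 - a) * (a - x) ^ 2) < 0 :=
    div_neg_of_neg_of_pos (mul_neg_of_pos_of_neg (sub_pos.2 hb1) (sub_neg.2 hba)) (by positivity)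
  refine ((hu.ellipticF_arcsin_sqrt hm1 hu0 hu1).const_mul _).congr_deriv ?_
  rw [hsign, ← neg_two_div_sqrt_mul_rpow_neg_half
    (sub_pos.2 (mul_lt_one_of_nonneg_of_lt_one_left hm0 hm1 hu1.le)) (mul_pos hu0 (sub_pos.2 hu1))
    (mul_pos hb0 (sub_pos.2 hb1)) hu'_neg
    (modulus_substitution_identity ha1.ne hb0.ne' hb1.ne hax.ne')]
  ring
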